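/- Let x₁, x₂, x₃ be integers with 2x₃² = 3x₁ − x₂, x₂ ≠ 3x₁ and x₂ ≠ −3x₁, and suppose A and B are integers with 2A = 3x₁² − x₂² and 8B = (x₂ + x₁)·(7x₁² + 2x₁x₂ − x₂²), and 4A³ + 27B² ≠ 0. Then the point (x₁, x₃(3x₁ + x₂)/2) lies on the elliptic curve E : Y² = X³ + A·X + B and has order 4 in E(ℚ). -/

import Mathlib

/-!
The tangent to `E` at `P = (x₁, x₃(3x₁ + x₂)/2)` has slope `x₃`, so `2P` has `X`-coordinate
`x₃² - 2x₁ = -(x₁ + x₂)/2` and `Y`-coordinate `0`. Hence `2P` is a point of order `2` and `P` has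
order `4`; the conditions `x₂ ≠ ±3x₁` keep `P` itself off the `X`-axis.
-/

/-- The elliptic curve `E : Y² = X³ + A·X + B` over `ℚ`, as an affine Weierstrass curve. -/
noncomputable def E (A B : ℤ) : WeierstrassCurve.Affine ℚ :=
  { a₁ := 0, a₂ := 0, a₃ := 0, a₄ := (A : ℚ), a₆ := (B : ℚ) }

open WeierstrassCurve.Affine

namespace WeierstrassCurve.Affine.Point

variable {F : Type*} [Field F] [DecidableEq F] {W : WeierstrassCurve.Affine F} {x y : F}

/-- `hy₂` says that the `Y`-coordinate of `2P` is that of `-2P`, i.e. `2P` has order `2`. -/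
theorem addOrderOf_some_eq_four (h : W.Nonsingular x y) (hy : y ≠ W.negY x y)
    (hy₂ : W.addY x x y (W.slope x x y y) =
      W.negY (W.addX x x (W.slope x x y y)) (W.addY x x y (W.slope x x y y))) :
    addOrderOf (some x y h) = 4 := by
  have hdouble : 2 • some x y h = some _ _ (nonsingular_add h h fun hxy => hy hxy.2) := by
    rw [two_nsmul, add_self_of_Y_ne hy]
  refine addOrderOf_eq_prime_pow (p := 2) (n := 1) ?_ ?_
  · rw [pow_one, hdouble]
    exact some_ne_zero _
  · rw [pow_two, mul_nsmul, hdouble, two_nsmul]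
    exact add_self_of_Y_eq hy₂

end WeierstrassCurve.Affine.Point

section ShortWeierstrass

variable {A B : ℤ} {x x' y ℓ : ℚ}

theorem E_equation_iff : (E A B).Equation x y ↔ y ^ 2 = x ^ 3 + A * x + B := by
  simp [equation_iff, E]

@[simp]
theorem E_negY : (E A B).negY x y = -y := by
  simp [E]

theorem E_addX : (E A B).addX x x' ℓ = ℓ ^ 2 - x - x' := by
  simp [E]

theorem E_addY : (E A B).addY x x' y ℓ = -(ℓ * (ℓ ^ 2 - 2 * x - x') + y) := by
  simp only [addY, E_negY, negAddY, E_addX]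
  ring

theorem E_Y_ne_negY (hy : y ≠ 0) : y ≠ (E A B).negY x y := by
  rw [E_negY]
  contrapose! hy
  linarith

theorem E_slope_self (hy : y ≠ 0) : (E A B).slope x x y y = (3 * x ^ 2 + A) / (2 * y) := by
  rw [slope_of_Y_ne rfl (E_Y_ne_negY hy), E_negY]
  simp only [E]
  ring

theorem E_nonsingular_of_Y_ne_zero (h : (E A B).Equation x y) (hy : y ≠ 0) :
    (E A B).Nonsingular x y :=
  (nonsingular_iff x y).2 ⟨h, Or.inr (E_Y_ne_negY hy)⟩

end ShortWeierstrass

section Family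

variable {A B : ℤ} {x₁ x₂ x₃ : ℚ}

theorem E_equation_family (hx₃ : 2 * x₃ ^ 2 = 3 * x₁ - x₂)
    (hA : 2 * (A : ℚ) = 3 * x₁ ^ 2 - x₂ ^ 2)
    (hB : 8 * (B : ℚ) = (x₂ + x₁) * (7 * x₁ ^ 2 + 2 * x₁ * x₂ - x₂ ^ 2)) :
    (E A B).Equation x₁ (x₃ * (3 * x₁ + x₂) / 2) := by
  rw [E_equation_iff]
  linear_combination (3 * x₁ + x₂) ^ 2 / 8 * hx₃ - x₁ / 2 * hA - hB / 8

theorem E_slope_family (hx₃ : 2 * x₃ ^ 2 = 3 * x₁ - x₂)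
    (hA : 2 * (A : ℚ) = 3 * x₁ ^ 2 - x₂ ^ 2) (hy : x₃ * (3 * x₁ + x₂) ≠ 0) :
    (E A B).slope x₁ x₁ (x₃ * (3 * x₁ + x₂) / 2) (x₃ * (3 * x₁ + x₂) / 2) = x₃ := by
  rw [E_slope_self (div_ne_zero hy two_ne_zero), div_eq_iff (by simpa using hy)]
  linear_combination hA / 2 - (3 * x₁ + x₂) / 2 * hx₃

theorem E_addY_family (hx₃ : 2 * x₃ ^ 2 = 3 * x₁ - x₂) :
    (E A B).addY x₁ x₁ (x₃ * (3 * x₁ + x₂) / 2) x₃ = 0 := by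
  rw [E_addY]
  linear_combination -x₃ / 2 * hx₃

end Family

theorem point_of_order_four_general (x₁ x₂ x₃ A B : ℤ)
    (hx₃ : 2 * x₃ ^ 2 = 3 * x₁ - x₂) (h1 : x₂ ≠ 3 * x₁) (h2 : x₂ ≠ -3 * x₁)
    (hA : 2 * A = 3 * x₁ ^ 2 - x₂ ^ 2)
    (hB : 8 * B = (x₂ + x₁) * (7 * x₁ ^ 2 + 2 * x₁ * x₂ - x₂ ^ 2)) :
    ∃ h : (E A B).Nonsingular ((x₁ : ℤ) : ℚ) (((x₃ * (3 * x₁ + x₂) : ℤ) : ℚ) / 2),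
      addOrderOf (WeierstrassCurve.Affine.Point.some _ _ h) = 4 := by
  have hy : x₃ * (3 * x₁ + x₂) ≠ 0 :=
    mul_ne_zero (by rintro rfl; apply h1; linarith) (by omega)
  have hyℚ : ((x₃ * (3 * x₁ + x₂) : ℤ) : ℚ) ≠ 0 := by exact_mod_cast hy
  push_cast at hyℚ ⊢
  have hx₃ℚ : 2 * (x₃ : ℚ) ^ 2 = 3 * x₁ - x₂ := by exact_mod_cast hx₃
  have hAℚ : 2 * (A : ℚ) = 3 * x₁ ^ 2 - x₂ ^ 2 := by exact_mod_cast hA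
  have hBℚ : 8 * (B : ℚ) = (x₂ + x₁) * (7 * x₁ ^ 2 + 2 * x₁ * x₂ - x₂ ^ 2) := by exact_mod_cast hB
  have hP := E_nonsingular_of_Y_ne_zero (E_equation_family hx₃ℚ hAℚ hBℚ)
    (div_ne_zero hyℚ two_ne_zero)
  refine ⟨hP, Point.addOrderOf_some_eq_four hP (E_Y_ne_negY (div_ne_zero hyℚ two_ne_zero)) ?_⟩
  rw [E_slope_family hx₃ℚ hAℚ hyℚ, E_addY_family hx₃ℚ, E_negY, neg_zero]

theorem point_of_order_four (x₁ x₂ x₃ A B : ℤ)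
    (hx₃ : 2 * x₃ ^ 2 = 3 * x₁ - x₂) (h1 : x₂ ≠ 3 * x₁) (h2 : x₂ ≠ -3 * x₁)
    (hA : 2 * A = 3 * x₁ ^ 2 - x₂ ^ 2)
    (hB : 8 * B = (x₂ + x₁) * (7 * x₁ ^ 2 + 2 * x₁ * x₂ - x₂ ^ 2))
    (hΔ : 4 * A ^ 3 + 27 * B ^ 2 ≠ 0) :
    ∃ h : (E A B).Nonsingular ((x₁ : ℤ) : ℚ) (((x₃ * (3 * x₁ + x₂) : ℤ) : ℚ) / 2),
      addOrderOf (WeierstrassCurve.Affine.Point.some _ _ h) = 4 :=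
  point_of_order_four_general x₁ x₂ x₃ A B hx₃ h1 h2 hA hB
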